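/- For every integer k ≥ 1, the minimum of the dominator chromatic number χ_d(D) over all orientations D of the path P_{4k} equals k+2. -/

import Mathlib

/-- A vertex `v` dominates the color class of color `a` under coloring `c`:
the class is nonempty and every vertex of that color is an out-neighbor of `v`. -/
def Dominates {V α : Type*} (A : V → V → Prop) (c : V → α) (v : V) (a : α) : Prop :=
  (∃ w, c w = a) ∧ ∀ w, c w = a → A v w

/-- A dominator coloring of the digraph with arc relation `A`: a proper coloring
such that every vertex with positive out-degree dominates some color class. -/
def IsDominatorColoring {V α : Type*} (A : V → V → Prop) (c : V → α) : Prop :=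
  (∀ u v, A u v → c u ≠ c v) ∧ ∀ v, (∃ w, A v w) → ∃ a, Dominates A c v a

/-- The dominator chromatic number: the least `k` admitting a dominator coloring
with colors in `Fin k`. -/
noncomputable def domChrom {V : Type*} (A : V → V → Prop) : ℕ :=
  sInf {k | ∃ c : V → Fin k, IsDominatorColoring A c}

/-- The arc relation of the orientation of the path `P_n` (vertices `0,…,n-1`)
determined by `o`: the edge between `i` and `i+1` is directed `i → i+1`
when `o i = true` and `i+1 → i` when `o i = false`. -/
def pathArc (n : ℕ) (o : ℕ → Bool) (u v : Fin n) : Prop :=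
  ((u : ℕ) + 1 = (v : ℕ) ∧ o u = true) ∨ ((v : ℕ) + 1 = (u : ℕ) ∧ o v = false)

/-- The minimum of the dominator chromatic number over all orientations of `P_n`. -/
noncomputable def minDomChromPath (n : ℕ) : ℕ :=
  sInf {m | ∃ o : ℕ → Bool, m = domChrom (pathArc n o)}

/-!
A vertex of an oriented path has at most two out-neighbours, and two distinct vertices have at
most one common out-neighbour. Hence a colour class dominated by some vertex, together with its
set of dominators, has at most three elements, while any other class is an independent set of
`P_{4k}`, of size at most `2k`. The sinks are independent too, so at least `2k` vertices must
dominate a class. Counting the `4k` vertices against these bounds rules out `k + 1` colours,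
except for `k = 1`, where the count is tight and `P_4` is checked exhaustively. Conversely, when
every odd vertex is a source, the vertices `4j + 1` and `4j + 3` both dominate the singleton class
`{4j + 2}`, and two more colours suffice for the remaining even and odd vertices.
-/

open Finset SimpleGraph

section DominatorColoring

variable {V α : Type*} {A : V → V → Prop} {c : V → α}

theorem isDominatorColoring_of_injective (hA : ∀ v, ¬ A v v) (hc : Function.Injective c) :
    IsDominatorColoring A c := by
  refine ⟨fun u v huv hcuv => hA u (hc hcuv ▸ huv), fun v ⟨w, hvw⟩ => ?_⟩
  exact ⟨c w, ⟨w, rfl⟩, fun w' hw' => hc hw' ▸ hvw⟩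

theorem domChrom_le {m : ℕ} {c : V → Fin m} (hc : IsDominatorColoring A c) : domChrom A ≤ m :=
  Nat.sInf_le ⟨c, hc⟩

theorem exists_isDominatorColoring_domChrom [Finite V] (hA : ∀ v, ¬ A v v) :
    ∃ c : V → Fin (domChrom A), IsDominatorColoring A c :=
  Nat.sInf_mem (s := {k | ∃ c : V → Fin k, IsDominatorColoring A c})
    ⟨_, _, isDominatorColoring_of_injective hA (Finite.equivFin V).injective⟩

variable [Fintype V]

open Classical in
noncomputable def sources (A : V → V → Prop) : Finset V := {v | ∃ w, A v w}

open Classical in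
noncomputable def colorClass (c : V → α) (a : α) : Finset V := {v | c v = a}

open Classical in
noncomputable def dominators (A : V → V → Prop) (c : V → α) (a : α) : Finset V :=
  {v | Dominates A c v a}

open Classical in
noncomputable def dominatedColors [Fintype α] (A : V → V → Prop) (c : V → α) : Finset α :=
  {a | ∃ v, Dominates A c v a}

@[simp] theorem mem_sources {v : V} : v ∈ sources A ↔ ∃ w, A v w := by simp [sources]

@[simp] theorem mem_colorClass {a : α} {v : V} : v ∈ colorClass c a ↔ c v = a := by
  simp [colorClass]

@[simp] theorem mem_dominators {a : α} {v : V} : v ∈ dominators A c a ↔ Dominates A c v a := by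
  simp [dominators]

@[simp] theorem mem_dominatedColors [Fintype α] {a : α} :
    a ∈ dominatedColors A c ↔ ∃ v, Dominates A c v a := by
  simp [dominatedColors]

theorem sum_card_colorClass [Fintype α] (c : V → α) :
    ∑ a, #(colorClass c a) = Fintype.card V := by
  classical
  simpa [colorClass] using
    (card_eq_sum_card_fiberwise fun v (_ : v ∈ univ) => mem_univ (c v)).symm

theorem card_sources_le_sum_card_dominators [Fintype α] (hc : IsDominatorColoring A c) :
    #(sources A) ≤ ∑ a ∈ dominatedColors A c, #(dominators A c a) := by
  classical
  refine (card_le_card fun v hv => ?_).trans card_biUnion_le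
  obtain ⟨a, ha⟩ := hc.2 v (mem_sources.1 hv)
  exact mem_biUnion.2 ⟨a, mem_dominatedColors.2 ⟨v, ha⟩, mem_dominators.2 ha⟩

end DominatorColoring

namespace SimpleGraph.pathGraph

variable {n : ℕ}

theorem card_le_two_of_forall_adj {s : Finset (Fin n)} {w : Fin n}
    (hs : ∀ x ∈ s, (pathGraph n).Adj w x) : #s ≤ 2 := by
  have hsub : s.map Fin.valEmbedding ⊆ {(w : ℕ) - 1, (w : ℕ) + 1} := by
    intro x hx
    obtain ⟨x, hxs, rfl⟩ := mem_map.1 hx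
    have := pathGraph_adj.1 (hs x hxs)
    simp only [Fin.valEmbedding_apply, mem_insert, mem_singleton]
    omega
  simpa using (card_le_card hsub).trans card_le_two

theorem card_le_one_of_forall_adj_adj {s : Finset (Fin n)} {u v : Fin n} (huv : u ≠ v)
    (hs : ∀ x ∈ s, (pathGraph n).Adj u x ∧ (pathGraph n).Adj v x) : #s ≤ 1 := by
  refine card_le_one.2 fun x hx y hy => Fin.ext ?_
  have := Fin.val_ne_of_ne huv
  have := pathGraph_adj.1 (hs x hx).1
  have := pathGraph_adj.1 (hs x hx).2
  have := pathGraph_adj.1 (hs y hy).1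
  have := pathGraph_adj.1 (hs y hy).2
  omega

theorem two_mul_card_le_of_isIndepSet {s : Finset (Fin n)}
    (hs : (pathGraph n).IsIndepSet (s : Set (Fin n))) : 2 * #s ≤ n + 1 := by
  have hmaps : Set.MapsTo (fun x : Fin n => (x : ℕ) / 2) s (range ((n + 1) / 2)) := by
    intro x _
    simp only [coe_range, Set.mem_Iio]
    omega
  have hinj : Set.InjOn (fun x : Fin n => (x : ℕ) / 2) s := by
    intro x hx y hy hxy
    by_contra hne
    exact hs hx hy hne (pathGraph_adj.2 (by simp only at hxy; omega))
  have := card_le_card_of_injOn _ hmaps hinj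
  rw [card_range] at this
  omega

end SimpleGraph.pathGraph

section PathOrientation

variable {n : ℕ} {o : ℕ → Bool}

theorem pathArc.adj {u v : Fin n} (h : pathArc n o u v) : (pathGraph n).Adj u v := by
  rcases h with ⟨h, -⟩ | ⟨h, -⟩ <;> simp [pathGraph_adj, h]

theorem pathArc_or_pathArc_of_adj {u v : Fin n} (h : (pathGraph n).Adj u v) :
    pathArc n o u v ∨ pathArc n o v u := by
  unfold pathArc
  cases hu : o u <;> cases hv : o v <;> rw [pathGraph_adj] at h <;> tauto

theorem not_pathArc_self (v : Fin n) : ¬ pathArc n o v v := fun h => h.adj.ne rfl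

theorem le_two_mul_card_sources_add_one : n ≤ 2 * #(sources (pathArc n o)) + 1 := by
  have hsinks : (pathGraph n).IsIndepSet ↑(sources (pathArc n o))ᶜ := by
    intro u hu v hv _ huv
    simp only [coe_compl, Set.mem_compl_iff, mem_coe, mem_sources] at hu hv
    rcases pathArc_or_pathArc_of_adj (o := o) huv with h | h
    exacts [hu ⟨v, h⟩, hv ⟨u, h⟩]
  have := pathGraph.two_mul_card_le_of_isIndepSet hsinks
  rw [card_compl, Fintype.card_fin] at this
  have := card_le_univ (sources (pathArc n o))
  rw [Fintype.card_fin] at this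
  omega

variable {α : Type*} {c : Fin n → α}

theorem two_mul_card_colorClass_le (hc : IsDominatorColoring (pathArc n o) c) (a : α) :
    2 * #(colorClass c a) ≤ n + 1 := by
  refine pathGraph.two_mul_card_le_of_isIndepSet fun u hu v hv _ huv => ?_
  simp only [mem_coe, mem_colorClass] at hu hv
  rcases pathArc_or_pathArc_of_adj (o := o) huv with h | h
  exacts [hc.1 u v h (hu.trans hv.symm), hc.1 v u h (hv.trans hu.symm)]

theorem card_dominators_le_two (a : α) : #(dominators (pathArc n o) c a) ≤ 2 := by
  by_cases ha : ∃ w, c w = a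
  · obtain ⟨w, hw⟩ := ha
    exact pathGraph.card_le_two_of_forall_adj (w := w) fun v hv =>
      ((mem_dominators.1 hv).2 w hw).adj.symm
  · rw [eq_empty_of_forall_notMem fun v hv => ha (mem_dominators.1 hv).1, card_empty]
    omega

theorem card_colorClass_add_card_dominators_le {a : α} {v₀ : Fin n}
    (h₀ : Dominates (pathArc n o) c v₀ a) :
    #(colorClass c a) + #(dominators (pathArc n o) c a) ≤ 3 := by
  have hD := card_dominators_le_two (o := o) (c := c) a
  rcases le_or_gt #(dominators (pathArc n o) c a) 1 with h | h
  · have : #(colorClass c a) ≤ 2 :=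
      pathGraph.card_le_two_of_forall_adj fun w hw => (h₀.2 w (mem_colorClass.1 hw)).adj
    omega
  · obtain ⟨u, hu, v, hv, huv⟩ := one_lt_card.1 h
    have : #(colorClass c a) ≤ 1 := by
      refine pathGraph.card_le_one_of_forall_adj_adj huv fun w hw => ?_
      have hw := mem_colorClass.1 hw
      exact ⟨((mem_dominators.1 hu).2 w hw).adj, ((mem_dominators.1 hv).2 w hw).adj⟩
    omega

variable [Fintype α]

theorem card_sources_le_two_mul_card_dominatedColors
    (hc : IsDominatorColoring (pathArc n o) c) :
    #(sources (pathArc n o)) ≤ 2 * #(dominatedColors (pathArc n o) c) := by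
  refine (card_sources_le_sum_card_dominators hc).trans ?_
  rw [mul_comm, ← smul_eq_mul]
  exact sum_le_card_nsmul _ _ _ fun a _ => card_dominators_le_two a

theorem card_add_card_sources_le (hc : IsDominatorColoring (pathArc n o) c) :
    n + #(sources (pathArc n o)) ≤
      3 * #(dominatedColors (pathArc n o) c) +
        (Fintype.card α - #(dominatedColors (pathArc n o) c)) * ((n + 1) / 2) := by
  classical
  have hsources := card_sources_le_sum_card_dominators hc
  set S := dominatedColors (pathArc n o) c
  have hclasses := sum_card_colorClass c
  rw [Fintype.card_fin, ← sum_add_sum_compl S] at hclasses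
  have hdominated :
      ∑ a ∈ S, (#(colorClass c a) + #(dominators (pathArc n o) c a)) ≤ #S • 3 :=
    sum_le_card_nsmul _ _ _ fun a ha =>
      card_colorClass_add_card_dominators_le (mem_dominatedColors.1 ha).choose_spec
  have hundominated : ∑ a ∈ Sᶜ, #(colorClass c a) ≤ #Sᶜ • ((n + 1) / 2) :=
    sum_le_card_nsmul _ _ _ fun a _ => by have := two_mul_card_colorClass_le hc a; omega
  rw [sum_add_distrib] at hdominated
  rw [card_compl] at hundominated
  simp only [smul_eq_mul] at hdominated hundominated
  omega

end PathOrientation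

theorem not_isDominatorColoring_pathArc_four (o : ℕ → Bool) (c : Fin 4 → Fin 2) :
    ¬ IsDominatorColoring (pathArc 4 o) c := by
  -- `decide` needs the orientation as a function on a finite type
  change ¬ IsDominatorColoring (fun u v : Fin 4 =>
    ((u : ℕ) + 1 = v ∧ (fun i : Fin 4 => o i) u = true) ∨
      ((v : ℕ) + 1 = u ∧ (fun i : Fin 4 => o i) v = false)) c
  generalize (fun i : Fin 4 => o i) = b
  revert c b
  unfold IsDominatorColoring Dominates
  beta_reduce
  decide

theorem add_two_le_of_isDominatorColoring_pathArc {k m : ℕ} (hk : 1 ≤ k) {o : ℕ → Bool}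
    {c : Fin (4 * k) → Fin m} (hc : IsDominatorColoring (pathArc (4 * k) o) c) : k + 2 ≤ m := by
  by_contra! hm
  have hcount := card_add_card_sources_le hc
  have hsources := card_sources_le_two_mul_card_dominatedColors hc
  have hsinks := le_two_mul_card_sources_add_one (n := 4 * k) (o := o)
  have hcolors := card_le_univ (dominatedColors (pathArc (4 * k) o) c)
  rw [Fintype.card_fin, show (4 * k + 1) / 2 = 2 * k by omega] at hcount
  rw [Fintype.card_fin] at hcolors
  rcases Nat.lt_or_ge #(dominatedColors (pathArc (4 * k) o) c) m with h | h
  · rw [show m - #(dominatedColors (pathArc (4 * k) o) c) = 1 by omega, one_mul] at hcount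
    omega
  · obtain rfl : k = 1 := by rw [Nat.sub_eq_zero_of_le h] at hcount; omega
    obtain rfl : m = 2 := by omega
    exact not_isDominatorColoring_pathArc_four o c hc

def alternatingOrientation (i : ℕ) : Bool := i % 2 == 1

theorem pathArc_alternatingOrientation_iff {n : ℕ} {u v : Fin n} :
    pathArc n alternatingOrientation u v ↔
      (u : ℕ) % 2 = 1 ∧ ((u : ℕ) + 1 = v ∨ (v : ℕ) + 1 = u) := by
  simp only [pathArc, alternatingOrientation, beq_iff_eq, beq_eq_false_iff_ne]
  omega

def blockColoring (k : ℕ) (v : Fin (4 * k)) : Fin (k + 2) :=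
  ⟨if (v : ℕ) % 4 = 2 then v / 4 else if (v : ℕ) % 2 = 0 then k else k + 1,
    by split_ifs <;> omega⟩

theorem isDominatorColoring_blockColoring (k : ℕ) :
    IsDominatorColoring (pathArc (4 * k) alternatingOrientation) (blockColoring k) := by
  refine ⟨fun u v huv => ?_, fun v ⟨w, hvw⟩ => ?_⟩
  · rw [pathArc_alternatingOrientation_iff] at huv
    have := v.isLt
    simp only [ne_eq, Fin.ext_iff, blockColoring]
    split_ifs <;> omega
  · rw [pathArc_alternatingOrientation_iff] at hvw
    have := v.isLt
    refine ⟨⟨v / 4, by omega⟩, ⟨⟨4 * (v / 4) + 2, by omega⟩, ?_⟩, fun w' hw' => ?_⟩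
    · simp only [Fin.ext_iff, blockColoring]
      split_ifs <;> omega
    · rw [pathArc_alternatingOrientation_iff]
      simp only [Fin.ext_iff, blockColoring] at hw'
      have := w'.isLt
      split_ifs at hw' <;> omega

theorem min_domChrom_orientations_of_path_four_k (k : ℕ) (hk : 1 ≤ k) :
    minDomChromPath (4 * k) = k + 2 := by
  have hlower (o : ℕ → Bool) : k + 2 ≤ domChrom (pathArc (4 * k) o) := by
    obtain ⟨c, hc⟩ :=
      exists_isDominatorColoring_domChrom (A := pathArc (4 * k) o) not_pathArc_self
    exact add_two_le_of_isDominatorColoring_pathArc hk hc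
  have hupper : domChrom (pathArc (4 * k) alternatingOrientation) ≤ k + 2 :=
    domChrom_le (isDominatorColoring_blockColoring k)
  unfold minDomChromPath
  apply le_antisymm
  · exact le_trans (Nat.sInf_le ⟨_, rfl⟩) hupper
  · refine le_csInf ⟨_, alternatingOrientation, rfl⟩ ?_
    rintro _ ⟨o, rfl⟩
    exact hlower o
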